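/- arXiv:1202.2599 — 4 statements merged into one kernel-verified Lean document; each statement's English description precedes it below -/
import Mathlib

section
/- For 0 ≤ α ≤ 1, the double integral over the triangle {0 < u < t < 1} of [(α ∨ t) - (α ∧ u)]^{-1} du dt equals 1 - α ln α - (1 - α) ln(1 - α), where 0 ln 0 := 0, ∨ denotes maximum, and ∧ denotes minimum. -/
open MeasureTheory Set intervalIntegral Real

/-!
Split the triangle along `t = α`. For `t < α` the integrand is `(α - u)⁻¹`, whose inner
integral is `log α - log (α - t)`. For `t > α` the inner integral splits at `u = α` into
`∫ (t - u)⁻¹ = log t - log (t - α)` and the integral of the constant `(t - α)⁻¹` over an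
interval of length `t - α`, which is `1`. The outer integrals then reduce to
`∫ log = x log x - x`.
-/

lemma setIntegral_Ioo_eq_intervalIntegral {E : Type*} [NormedAddCommGroup E] [NormedSpace ℝ E]
    {f : ℝ → E} {a b : ℝ} (hab : a ≤ b) : ∫ x in Ioo a b, f x = ∫ x in a..b, f x := by
  rw [integral_of_le hab, integral_Ioc_eq_integral_Ioo]

lemma integral_inv_sub {b c d : ℝ} (hbc : b ≤ c) (hcd : c < d) :
    ∫ x in b..c, (d - x)⁻¹ = log (d - b) - log (d - c) := by
  rw [integral_comp_sub_left (fun x => x⁻¹) d, integral_inv_of_pos (by linarith) (by linarith),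
    log_div (by linarith) (by linarith)]

lemma integral_inv_max_sub_min_of_lt {α t : ℝ} (ht : 0 ≤ t) (htα : t < α) :
    ∫ u in (0 : ℝ)..t, (max α t - min α u)⁻¹ = log α - log (α - t) := by
  have hEq : EqOn (fun u => (max α t - min α u)⁻¹) (fun u => (α - u)⁻¹) (uIcc 0 t) := by
    intro u hu
    rw [uIcc_of_le ht] at hu
    simp only [max_eq_left htα.le, min_eq_right (hu.2.trans htα.le)]
  rw [integral_congr hEq, integral_inv_sub ht htα, sub_zero]

lemma integral_inv_max_sub_min_of_gt {α t : ℝ} (hα : 0 ≤ α) (hαt : α < t) :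
    ∫ u in (0 : ℝ)..t, (max α t - min α u)⁻¹ = 1 + log t - log (t - α) := by
  have hcont : ContinuousOn (fun u => (max α t - min α u)⁻¹) (uIcc 0 t) :=
    (continuous_const.sub (continuous_const.min continuous_id)).continuousOn.inv₀ fun u _ => by
      rw [max_eq_right hαt.le]
      exact sub_ne_zero.2 ((min_le_left α u).trans_lt hαt).ne'
  have hsub {a b : ℝ} (ha : a ∈ uIcc 0 t) (hb : b ∈ uIcc 0 t) :
      IntervalIntegrable (fun u => (max α t - min α u)⁻¹) volume a b :=
    hcont.intervalIntegrable.mono_set (uIcc_subset_uIcc ha hb)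
  have hα_mem : α ∈ uIcc 0 t := by rw [uIcc_of_le (hα.trans hαt.le)]; exact ⟨hα, hαt.le⟩
  have hEq₁ : EqOn (fun u => (max α t - min α u)⁻¹) (fun u => (t - u)⁻¹) (uIcc 0 α) := by
    intro u hu
    rw [uIcc_of_le hα] at hu
    simp only [max_eq_right hαt.le, min_eq_right hu.2]
  have hEq₂ :
      EqOn (fun u => (max α t - min α u)⁻¹) (fun _ => (t - α)⁻¹) (uIcc α t) := by
    intro u hu
    rw [uIcc_of_le hαt.le] at hu
    simp only [max_eq_right hαt.le, min_eq_left hu.1]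
  rw [← integral_add_adjacent_intervals (hsub left_mem_uIcc hα_mem)
      (hsub hα_mem right_mem_uIcc), integral_congr hEq₁, integral_congr hEq₂,
    integral_inv_sub hα hαt, intervalIntegral.integral_const, smul_eq_mul,
    mul_inv_cancel₀ (sub_ne_zero.2 hαt.ne'), sub_zero]
  ring

lemma intervalIntegrable_log_sub_left (a b c : ℝ) :
    IntervalIntegrable (fun x => log (c - x)) volume a b := by
  simpa using intervalIntegrable_log'.comp_sub_left c (a := c - a) (b := c - b)

lemma intervalIntegrable_log_sub_right (a b c : ℝ) :
    IntervalIntegrable (fun x => log (x - c)) volume a b := by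
  simpa using intervalIntegrable_log'.comp_sub_right c (a := a - c) (b := b - c)

lemma integral_log_sub_log_sub (a : ℝ) : ∫ t in (0 : ℝ)..a, (log a - log (a - t)) = a := by
  rw [integral_sub intervalIntegrable_const (intervalIntegrable_log_sub_left 0 a a),
    intervalIntegral.integral_const, integral_comp_sub_left (fun x => log x) a, integral_log]
  simp

lemma integral_one_add_log_sub_log_sub (a : ℝ) :
    ∫ t in a..1, (1 + log t - log (t - a)) = 1 - a - a * log a - (1 - a) * log (1 - a) := by
  rw [integral_sub (intervalIntegrable_const.add intervalIntegrable_log')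
      (intervalIntegrable_log_sub_right a 1 a),
    integral_add intervalIntegrable_const intervalIntegrable_log',
    intervalIntegral.integral_const, integral_comp_sub_right (fun x => log x) a,
    integral_log, integral_log]
  simp only [smul_eq_mul, mul_one, log_one, mul_zero, zero_sub, sub_add_add_cancel,
    add_sub_cancel, sub_self, log_zero, sub_zero, add_zero]
  ring

/-- For `0 ≤ α ≤ 1`, the integral over the triangle `{0 < u < t < 1}` of
`[(α ∨ t) - (α ∧ u)]⁻¹` equals `1 - α ln α - (1-α) ln(1-α)` (with `0 ln 0 := 0`,
as is the convention of `Real.log`). -/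
theorem stmt_7 (α : ℝ) (h0 : 0 ≤ α) (h1 : α ≤ 1) :
    ∫ t in Ioo (0 : ℝ) 1, ∫ u in Ioo (0 : ℝ) t, (max α t - min α u)⁻¹
      = 1 - α * Real.log α - (1 - α) * Real.log (1 - α) := by
  set F : ℝ → ℝ := fun t => ∫ u in (0 : ℝ)..t, (max α t - min α u)⁻¹
  have hF₁ : EqOn (fun t => log α - log (α - t)) F (uIoo 0 α) := by
    rw [uIoo_of_le h0]
    exact fun t ht => (integral_inv_max_sub_min_of_lt ht.1.le ht.2).symm
  have hF₂ : EqOn (fun t => 1 + log t - log (t - α)) F (uIoo α 1) := by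
    rw [uIoo_of_le h1]
    exact fun t ht => (integral_inv_max_sub_min_of_gt h0 ht.1).symm
  have hF₁int : IntervalIntegrable F volume 0 α :=
    (intervalIntegrable_const.sub (intervalIntegrable_log_sub_left 0 α α)).congr_uIoo hF₁
  have hF₂int : IntervalIntegrable F volume α 1 :=
    ((intervalIntegrable_const.add intervalIntegrable_log').sub
      (intervalIntegrable_log_sub_right α 1 α)).congr_uIoo hF₂
  have hinner : EqOn (fun t => ∫ u in Ioo (0 : ℝ) t, (max α t - min α u)⁻¹) F (Ioo 0 1) :=
    fun t ht => setIntegral_Ioo_eq_intervalIntegral ht.1.le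
  rw [setIntegral_congr_fun measurableSet_Ioo hinner,
    setIntegral_Ioo_eq_intervalIntegral zero_le_one,
    ← integral_add_adjacent_intervals hF₁int hF₂int, ← integral_congr_uIoo hF₁,
    ← integral_congr_uIoo hF₂, integral_log_sub_log_sub,
    integral_one_add_log_sub_log_sub]
  ring
end

section
/- Suppose Ĥ : {(x,y) : 0 ≤ x < α < y ≤ 1} → [0, M(y-x)^{-3}] (for some constant M) is nonnegative, measurable, and satisfies Ĥ(x,y) = ∫_0^x (y-λ)^{-1} Ĥ(λ,y) dλ + ∫_y^1 (ρ-x)^{-1} Ĥ(x,ρ) dρ for all such (x,y). Then Ĥ ≡ 0. -/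
/-!
Iterate the equation. The kernels `(y - λ)⁻¹` and `(ρ - x)⁻¹` turn a bound `C (y - x)⁻³` on `Ĥ`
into integrands bounded by `C (y - λ)⁻⁴` and `C (ρ - x)⁻⁴`, whose integrals over `(0, x)` and
`(y, 1)` are each at most `C (y - x)⁻³ / 3`. Hence `Ĥ ≤ (2/3)ʳ M (y - x)⁻³` for every `r`.
-/

open MeasureTheory Set Filter Topology

lemma hasDerivAt_inv_sub_pow_three_div_three {c l : ℝ} (hl : c - l ≠ 0) :
    HasDerivAt (fun l => ((c - l) ^ 3)⁻¹ / 3) ((c - l) ^ 4)⁻¹ l := by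
  have hsub : HasDerivAt (fun l : ℝ => c - l) (-1) l := by
    simpa using (hasDerivAt_id l).const_sub c
  refine (((hsub.fun_pow 3).inv (pow_ne_zero 3 hl)).div_const 3).congr_deriv ?_
  field_simp
  ring

lemma continuousOn_inv_sub_pow_four {a b c : ℝ} (hc : c ∉ Icc a b) :
    ContinuousOn (fun l => ((c - l) ^ 4)⁻¹) (Icc a b) :=
  ((continuousOn_const.sub continuousOn_id).pow 4).inv₀ fun l hl =>
    pow_ne_zero 4 (sub_ne_zero.mpr fun h : c = l => hc (h ▸ hl))

lemma integral_Ioo_inv_sub_pow_four {a b c : ℝ} (hab : a ≤ b) (hc : c ∉ Icc a b) :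
    ∫ l in Ioo a b, ((c - l) ^ 4)⁻¹ = ((c - b) ^ 3)⁻¹ / 3 - ((c - a) ^ 3)⁻¹ / 3 := by
  rw [← integral_Ioc_eq_integral_Ioo (E := ℝ), ← intervalIntegral.integral_of_le hab]
  refine intervalIntegral.integral_eq_sub_of_hasDerivAt (f := fun l => ((c - l) ^ 3)⁻¹ / 3)
    (fun l hl => ?_) ?_
  · rw [uIcc_of_le hab] at hl
    exact hasDerivAt_inv_sub_pow_three_div_three (sub_ne_zero.mpr fun h : c = l => hc (h ▸ hl))
  · rw [intervalIntegrable_iff_integrableOn_Icc_of_le hab]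
    exact (continuousOn_inv_sub_pow_four hc).integrableOn_Icc

lemma setIntegral_Ioo_le_of_le_inv_sub_pow_four {a b c C : ℝ} {f : ℝ → ℝ} (hab : a ≤ b)
    (hc : c ∉ Icc a b) (hf₀ : ∀ l ∈ Ioo a b, 0 ≤ f l)
    (hf : ∀ l ∈ Ioo a b, f l ≤ C * ((c - l) ^ 4)⁻¹) :
    ∫ l in Ioo a b, f l ≤ C * (((c - b) ^ 3)⁻¹ / 3 - ((c - a) ^ 3)⁻¹ / 3) := by
  rw [← integral_Ioo_inv_sub_pow_four hab hc, ← integral_const_mul]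
  refine integral_mono_of_nonneg ((ae_restrict_iff' measurableSet_Ioo).mpr (.of_forall hf₀))
    ?_ ((ae_restrict_iff' measurableSet_Ioo).mpr (.of_forall hf))
  exact ((continuousOn_inv_sub_pow_four hc).integrableOn_Icc.mono_set
    Ioo_subset_Icc_self).const_mul C

lemma le_two_thirds_of_le_mul_inv_sub_pow_three {α C : ℝ} {H : ℝ → ℝ → ℝ} (hC : 0 ≤ C)
    (hnonneg : ∀ x y, 0 ≤ x → x < α → α < y → y ≤ 1 → 0 ≤ H x y)
    (heq : ∀ x y, 0 ≤ x → x < α → α < y → y ≤ 1 →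
      H x y = (∫ l in Ioo (0 : ℝ) x, (y - l)⁻¹ * H l y) + ∫ r in Ioo y 1, (r - x)⁻¹ * H x r)
    (hH : ∀ x y, 0 ≤ x → x < α → α < y → y ≤ 1 → H x y ≤ C * ((y - x) ^ 3)⁻¹) :
    ∀ x y, 0 ≤ x → x < α → α < y → y ≤ 1 → H x y ≤ 2 / 3 * C * ((y - x) ^ 3)⁻¹ := by
  intro x y hx hxα hαy hy1
  have hleft : ∫ l in Ioo (0 : ℝ) x, (y - l)⁻¹ * H l y
      ≤ C * (((y - x) ^ 3)⁻¹ / 3 - (y ^ 3)⁻¹ / 3) := by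
    refine (setIntegral_Ioo_le_of_le_inv_sub_pow_four hx (fun h => by linarith [h.2])
      (fun l hl => ?_) (fun l hl => ?_)).trans_eq (by rw [sub_zero])
    · have : 0 < y - l := by linarith [hl.2]
      exact mul_nonneg (inv_nonneg.mpr this.le) (hnonneg l y hl.1.le (hl.2.trans hxα) hαy hy1)
    · have : 0 < y - l := by linarith [hl.2]
      calc (y - l)⁻¹ * H l y ≤ (y - l)⁻¹ * (C * ((y - l) ^ 3)⁻¹) :=
            mul_le_mul_of_nonneg_left (hH l y hl.1.le (hl.2.trans hxα) hαy hy1) (by positivity)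
        _ = C * ((y - l) ^ 4)⁻¹ := by field_simp
  have hright : ∫ r in Ioo y 1, (r - x)⁻¹ * H x r
      ≤ C * (((y - x) ^ 3)⁻¹ / 3 - ((1 - x) ^ 3)⁻¹ / 3) := by
    refine (setIntegral_Ioo_le_of_le_inv_sub_pow_four (c := x) (C := C) hy1
      (fun h => by linarith [h.1]) (fun r hr => ?_) (fun r hr => ?_)).trans_eq ?_
    · have : 0 < r - x := by linarith [hr.1]
      exact mul_nonneg (inv_nonneg.mpr this.le) (hnonneg x r hx hxα (hαy.trans hr.1) hr.2.le)
    · have : 0 < r - x := by linarith [hr.1]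
      calc (r - x)⁻¹ * H x r ≤ (r - x)⁻¹ * (C * ((r - x) ^ 3)⁻¹) :=
            mul_le_mul_of_nonneg_left (hH x r hx hxα (hαy.trans hr.1) hr.2.le) (by positivity)
        _ = C * ((x - r) ^ 4)⁻¹ := by rw [show (x - r) ^ 4 = (r - x) ^ 4 by ring]; field_simp
    · rw [show (x - 1) ^ 3 = -(1 - x) ^ 3 by ring, show (x - y) ^ 3 = -(y - x) ^ 3 by ring,
        inv_neg, inv_neg]
      ring
  have hy : 0 < y := by linarith
  have hx1 : 0 < 1 - x := by linarith
  have : 0 ≤ C * (y ^ 3)⁻¹ := by positivity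
  have : 0 ≤ C * ((1 - x) ^ 3)⁻¹ := by positivity
  rw [heq x y hx hxα hαy hy1]
  linarith

theorem stmt_11_general (α M : ℝ) (hα0 : 0 < α) (hα1 : α < 1)
    (H : ℝ → ℝ → ℝ)
    (hnonneg : ∀ x y, 0 ≤ x → x < α → α < y → y ≤ 1 → 0 ≤ H x y)
    (hbound : ∀ x y, 0 ≤ x → x < α → α < y → y ≤ 1 → H x y ≤ M * ((y - x) ^ 3)⁻¹)
    (heq : ∀ x y, 0 ≤ x → x < α → α < y → y ≤ 1 →
      H x y = (∫ l in Ioo (0 : ℝ) x, (y - l)⁻¹ * H l y)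
        + ∫ r in Ioo y 1, (r - x)⁻¹ * H x r) :
    ∀ x y, 0 ≤ x → x < α → α < y → y ≤ 1 → H x y = 0 := by
  have hM : 0 ≤ M := by
    have h := (hnonneg 0 1 le_rfl hα0 hα1 le_rfl).trans (hbound 0 1 le_rfl hα0 hα1 le_rfl)
    simpa using h
  have hiter : ∀ r : ℕ, ∀ x y, 0 ≤ x → x < α → α < y → y ≤ 1 →
      H x y ≤ (2 / 3) ^ r * M * ((y - x) ^ 3)⁻¹ := by
    intro r
    induction r with
    | zero => simpa using hbound
    | succ n ih =>
      simpa only [pow_succ', mul_assoc] using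
        le_two_thirds_of_le_mul_inv_sub_pow_three (by positivity) hnonneg heq ih
  intro x y hx hxα hαy hy1
  have hlim : Tendsto (fun r : ℕ => (2 / 3 : ℝ) ^ r * M * ((y - x) ^ 3)⁻¹) atTop (𝓝 0) := by
    simpa using ((tendsto_pow_atTop_nhds_zero_of_lt_one (by norm_num : (0 : ℝ) ≤ 2 / 3)
      (by norm_num)).mul_const M).mul_const ((y - x) ^ 3)⁻¹
  exact le_antisymm (ge_of_tendsto' hlim fun r => hiter r x y hx hxα hαy hy1)
    (hnonneg x y hx hxα hαy hy1)

/-- Uniqueness: if `Ĥ` is nonnegative, measurable, bounded by `M (y-x)⁻³` on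
`{0 ≤ x < α < y ≤ 1}`, and satisfies
`Ĥ(x,y) = ∫_0^x (y-λ)⁻¹ Ĥ(λ,y) dλ + ∫_y^1 (ρ-x)⁻¹ Ĥ(x,ρ) dρ` there, then `Ĥ ≡ 0`
on that region. -/
theorem stmt_11 (α M : ℝ) (hα0 : 0 < α) (hα1 : α < 1)
    (H : ℝ → ℝ → ℝ) (hmeas : Measurable (Function.uncurry H))
    (hnonneg : ∀ x y, 0 ≤ x → x < α → α < y → y ≤ 1 → 0 ≤ H x y)
    (hbound : ∀ x y, 0 ≤ x → x < α → α < y → y ≤ 1 → H x y ≤ M * ((y - x) ^ 3)⁻¹)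
    (heq : ∀ x y, 0 ≤ x → x < α → α < y → y ≤ 1 →
      H x y = (∫ l in Ioo (0 : ℝ) x, (y - l)⁻¹ * H l y)
        + ∫ r in Ioo y 1, (r - x)⁻¹ * H x r) :
    ∀ x y, 0 ≤ x → x < α → α < y → y ≤ 1 → H x y = 0 :=
  stmt_11_general α M hα0 hα1 H hnonneg hbound heq
end

section
/- Let α ∈ [0,1], 0 ≤ x < α < y ≤ 1, and 0 < w < u < 1 with x < w and u < y possible. Then ∫ over {(λ,ρ) : 0 ≤ λ < α < ρ ≤ 1} of (ρ-λ)^{-1} 1(λ < w < u < ρ) dν(λ,ρ) = [(α ∨ u) - (α ∧ w)]^{-1}, where ν(dλ,dρ) = δ_0(dλ)δ_1(dρ) + (1-λ)^{-1} dλ δ_1(dρ) + δ_0(dλ) ρ^{-1} dρ + 2(ρ-λ)^{-2} dλ dρ. -/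
/-!
With `a = α ∧ w` and `b = α ∨ u`, the integrand is `(ρ - λ)⁻¹` on the rectangle
`[0, a) × (b, 1]`. The four parts of `ν` contribute `1`, `(1 - a)⁻¹ - 1`, `b⁻¹ - 1` and
`((b - a)⁻¹ - b⁻¹) - ((1 - a)⁻¹ - 1)`, each an elementary integral of a negative power
(the last one by Fubini), and the sum telescopes to `(b - a)⁻¹`.
-/

open MeasureTheory Set

theorem integral_inv_pow_succ {p q : ℝ} (hp : 0 < p) (hq : 0 < q) {n : ℕ} (hn : n ≠ 0) :
    ∫ x in p..q, ((x ^ (n + 1))⁻¹) = ((p ^ n)⁻¹ - (q ^ n)⁻¹) / n := by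
  have h0 : (0 : ℝ) ∉ uIcc p q := fun h => (lt_min hp hq).not_ge h.1
  have key := integral_zpow (a := p) (b := q) (n := -(n + 1 : ℕ))
    (Or.inr ⟨by omega, h0⟩)
  simp only [zpow_neg, zpow_natCast] at key
  have hexp : -((n + 1 : ℕ) : ℤ) + 1 = -(n : ℤ) := by push_cast; ring
  rw [key, hexp]
  simp only [zpow_neg, zpow_natCast]
  push_cast
  rw [show -((n : ℝ) + 1) + 1 = -n by ring, div_neg, ← neg_div, neg_sub]

theorem integral_inv_sub_sq {c p q : ℝ} (hp : p < c) (hq : q < c) :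
    ∫ x in p..q, ((c - x) ^ 2)⁻¹ = (c - q)⁻¹ - (c - p)⁻¹ := by
  rw [intervalIntegral.integral_comp_sub_left (fun x => (x ^ 2)⁻¹),
    integral_inv_pow_succ (by linarith) (by linarith) one_ne_zero]
  simp

theorem intervalIntegrable_inv_sub_sq {c p q : ℝ} (hp : p < c) (hq : q < c) :
    IntervalIntegrable (fun x => ((c - x) ^ 2)⁻¹) volume p q := by
  have hne : ∀ x ∈ uIcc p q, (c - x) ^ 2 ≠ 0 := fun x hx =>
    pow_ne_zero 2 (sub_ne_zero.2 (by linarith [hx.2, max_lt hp hq]))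
  exact ContinuousOn.intervalIntegrable (by fun_prop (disch := assumption))

theorem integral_inv_sub_cube {t p q : ℝ} (hp : t < p) (hq : t < q) :
    ∫ x in p..q, ((x - t) ^ 3)⁻¹ = (((p - t) ^ 2)⁻¹ - ((q - t) ^ 2)⁻¹) / 2 := by
  rw [intervalIntegral.integral_comp_sub_right (fun x => (x ^ 3)⁻¹),
    integral_inv_pow_succ (by linarith) (by linarith) two_ne_zero]
  norm_num

section
variable {α β E : Type*} [MeasurableSpace α] [MeasurableSpace β] [NormedAddCommGroup E]

theorem integrable_prod_dirac_iff (μ : Measure α) [SFinite μ] [MeasurableSingletonClass β]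
    (y : β) {f : α × β → E} :
    Integrable f (μ.prod (Measure.dirac y)) ↔ Integrable (fun x => f (x, y)) μ := by
  rw [Measure.prod_dirac, (measurableEmbedding_prod_mk_right y).integrable_map_iff]; rfl

theorem integrable_dirac_prod_iff (ν : Measure β) [SFinite ν] [MeasurableSingletonClass α]
    (x : α) {f : α × β → E} :
    Integrable f ((Measure.dirac x).prod ν) ↔ Integrable (fun y => f (x, y)) ν := by
  rw [Measure.dirac_prod, (measurableEmbedding_prodMk_left x).integrable_map_iff]; rfl

variable [NormedSpace ℝ E]

theorem integral_prod_dirac (μ : Measure α) [SFinite μ] [MeasurableSingletonClass β] (y : β)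
    (f : α × β → E) : ∫ q, f q ∂μ.prod (Measure.dirac y) = ∫ x, f (x, y) ∂μ := by
  rw [Measure.prod_dirac, (measurableEmbedding_prod_mk_right y).integral_map]

theorem integral_dirac_prod (ν : Measure β) [SFinite ν] [MeasurableSingletonClass α] (x : α)
    (f : α × β → E) : ∫ q, f q ∂(Measure.dirac x).prod ν = ∫ y, f (x, y) ∂ν := by
  rw [Measure.dirac_prod, (measurableEmbedding_prodMk_left x).integral_map]

end

theorem toNNReal_smul_indicator {α E : Type*} [AddCommMonoid E] [Module ℝ E] {d : α → ℝ}
    {s : Set α} (hd : ∀ x ∈ s, 0 ≤ d x) (g : α → E) :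
    (fun x => (d x).toNNReal • s.indicator g x) = s.indicator (fun x => d x • g x) := by
  ext x
  by_cases hx : x ∈ s
  · simp [hx, NNReal.smul_def, Real.coe_toNNReal _ (hd x hx)]
  · simp [hx]

section
variable {α E : Type*} [MeasurableSpace α] [NormedAddCommGroup E] [NormedSpace ℝ E]
  {μ : Measure α} {d : α → ℝ} {s : Set α}

theorem integrable_withDensity_ofReal_indicator_iff (hd : Measurable d) (hs : MeasurableSet s)
    (hd0 : ∀ x ∈ s, 0 ≤ d x) {g : α → E} :
    Integrable (s.indicator g) (μ.withDensity (fun x => ENNReal.ofReal (d x))) ↔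
      IntegrableOn (fun x => d x • g x) s μ := by
  rw [← integrable_indicator_iff hs, ← toNNReal_smul_indicator hd0]
  exact integrable_withDensity_iff_integrable_smul hd.real_toNNReal

theorem integral_withDensity_ofReal_indicator (hd : Measurable d) (hs : MeasurableSet s)
    (hd0 : ∀ x ∈ s, 0 ≤ d x) (g : α → E) :
    ∫ x, s.indicator g x ∂μ.withDensity (fun x => ENNReal.ofReal (d x)) =
      ∫ x in s, d x • g x ∂μ := by
  rw [← integral_indicator hs, ← toNNReal_smul_indicator hd0]
  exact integral_withDensity_eq_integral_smul hd.real_toNNReal _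

end

/-- The endpoint measure `ν` of the QuickVal analysis (Proposition A.1). -/
noncomputable def quickValMeasure : Measure (ℝ × ℝ) :=
  (Measure.dirac (0 : ℝ)).prod (Measure.dirac (1 : ℝ))
    + (volume.withDensity (fun l : ℝ => ENNReal.ofReal (1 - l)⁻¹)).prod (Measure.dirac (1 : ℝ))
    + (Measure.dirac (0 : ℝ)).prod (volume.withDensity (fun r : ℝ => ENNReal.ofReal r⁻¹))
    + (volume : Measure (ℝ × ℝ)).withDensity
        (fun q : ℝ × ℝ => ENNReal.ofReal (2 * ((q.2 - q.1) ^ 2)⁻¹))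

noncomputable def invGapIndicator (a b : ℝ) : ℝ × ℝ → ℝ :=
  (Ico 0 a ×ˢ Ioc b 1).indicator fun q => (q.2 - q.1)⁻¹

namespace invGapIndicator
variable {a b : ℝ}

theorem apply_one (hb : b < 1) (l : ℝ) :
    invGapIndicator a b (l, 1) = (Ico 0 a).indicator (fun l => (1 - l)⁻¹) l := by
  by_cases hl : l ∈ Ico 0 a <;> simp [invGapIndicator, indicator, hl, hb]

theorem zero_apply (ha : 0 < a) (r : ℝ) :
    invGapIndicator a b (0, r) = (Ioc b 1).indicator (fun r => r⁻¹) r := by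
  by_cases hr : r ∈ Ioc b 1 <;> simp [invGapIndicator, indicator, hr, ha]

theorem integrable_withDensity_prod_dirac (ha : a < 1) (hb : b < 1) :
    Integrable (invGapIndicator a b)
      ((volume.withDensity fun l : ℝ => ENNReal.ofReal (1 - l)⁻¹).prod (Measure.dirac 1)) := by
  have hpos : ∀ l ∈ Icc 0 a, 0 < 1 - l := fun l hl => by linarith [hl.2]
  have hne : ∀ l ∈ Icc 0 a, 1 - l ≠ 0 := fun l hl => (hpos l hl).ne'
  rw [integrable_prod_dirac_iff]
  simp_rw [apply_one hb]
  rw [integrable_withDensity_ofReal_indicator_iff (d := fun l => (1 - l)⁻¹) (by fun_prop)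
    measurableSet_Ico fun l hl => (inv_pos.2 (hpos l (Ico_subset_Icc_self hl))).le]
  exact (ContinuousOn.integrableOn_Icc (by fun_prop (disch := assumption))).mono_set
    Ico_subset_Icc_self

theorem integral_withDensity_prod_dirac (ha0 : 0 ≤ a) (ha : a < 1) (hb : b < 1) :
    ∫ q, invGapIndicator a b q
      ∂(volume.withDensity fun l : ℝ => ENNReal.ofReal (1 - l)⁻¹).prod (Measure.dirac 1) =
      (1 - a)⁻¹ - 1 := by
  rw [integral_prod_dirac]
  simp_rw [apply_one hb]
  rw [integral_withDensity_ofReal_indicator (d := fun l => (1 - l)⁻¹) (by fun_prop)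
    measurableSet_Ico fun l hl => (inv_pos.2 (by linarith [hl.2])).le,
    integral_Ico_eq_integral_Ioo, ← integral_Ioc_eq_integral_Ioo,
    ← intervalIntegral.integral_of_le ha0]
  simp_rw [smul_eq_mul, ← mul_inv, ← sq]
  rw [integral_inv_sub_sq (by linarith) ha]
  simp

theorem integrable_dirac_prod_withDensity (ha : 0 < a) (hb : 0 < b) :
    Integrable (invGapIndicator a b)
      ((Measure.dirac 0).prod (volume.withDensity fun r : ℝ => ENNReal.ofReal r⁻¹)) := by
  have hne : ∀ r ∈ Icc b 1, r ≠ 0 := fun r hr => by linarith [hr.1]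
  rw [integrable_dirac_prod_iff]
  simp_rw [zero_apply ha]
  rw [integrable_withDensity_ofReal_indicator_iff (d := fun r => r⁻¹) measurable_inv
    measurableSet_Ioc fun r hr => inv_nonneg.2 (by linarith [hr.1])]
  exact (ContinuousOn.integrableOn_Icc (by fun_prop (disch := assumption))).mono_set
    Ioc_subset_Icc_self

theorem integral_dirac_prod_withDensity (ha : 0 < a) (hb0 : 0 < b) (hb : b < 1) :
    ∫ q, invGapIndicator a b q
      ∂(Measure.dirac 0).prod (volume.withDensity fun r : ℝ => ENNReal.ofReal r⁻¹) =
      b⁻¹ - 1 := by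
  rw [integral_dirac_prod]
  simp_rw [zero_apply ha]
  rw [integral_withDensity_ofReal_indicator (d := fun r => r⁻¹) measurable_inv
    measurableSet_Ioc fun r hr => inv_nonneg.2 (by linarith [hr.1]),
    ← intervalIntegral.integral_of_le hb.le]
  simp_rw [smul_eq_mul, ← mul_inv, ← sq]
  rw [integral_inv_pow_succ hb0 one_pos one_ne_zero]
  simp

theorem integrableOn_gapDensity_smul (hab : a < b) :
    IntegrableOn (fun q : ℝ × ℝ => (2 * ((q.2 - q.1) ^ 2)⁻¹) • (q.2 - q.1)⁻¹)
      (Ico 0 a ×ˢ Ioc b 1) := by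
  have hne : ∀ q ∈ Icc 0 a ×ˢ Icc b 1, q.2 - q.1 ≠ 0 := fun q hq => by
    linarith [hq.1.2, hq.2.1]
  have hne2 : ∀ q ∈ Icc 0 a ×ˢ Icc b 1, (q.2 - q.1) ^ 2 ≠ 0 := fun q hq =>
    pow_ne_zero 2 (hne q hq)
  exact (ContinuousOn.integrableOn_compact (isCompact_Icc.prod isCompact_Icc)
    (by fun_prop (disch := assumption))).mono_set
      (prod_mono Ico_subset_Icc_self Ioc_subset_Icc_self)

theorem integrable_withDensity_gap (hab : a < b) :
    Integrable (invGapIndicator a b) ((volume : Measure (ℝ × ℝ)).withDensity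
      fun q => ENNReal.ofReal (2 * ((q.2 - q.1) ^ 2)⁻¹)) :=
  (integrable_withDensity_ofReal_indicator_iff (by fun_prop)
    (measurableSet_Ico.prod measurableSet_Ioc) (fun _ _ => by positivity)).2
    (integrableOn_gapDensity_smul hab)

theorem integral_withDensity_gap (ha0 : 0 ≤ a) (hab : a < b) (hb : b < 1) :
    ∫ q, invGapIndicator a b q ∂(volume : Measure (ℝ × ℝ)).withDensity
      (fun q => ENNReal.ofReal (2 * ((q.2 - q.1) ^ 2)⁻¹)) =
      ((b - a)⁻¹ - b⁻¹) - ((1 - a)⁻¹ - 1) := by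
  have hinner : EqOn (fun l => ∫ r in Ioc b 1, (2 * ((r - l) ^ 2)⁻¹) • (r - l)⁻¹)
      (fun l => ((b - l) ^ 2)⁻¹ - ((1 - l) ^ 2)⁻¹) (Ico 0 a) := fun l hl => by
    have hlb : l < b := hl.2.trans hab
    simp_rw [← intervalIntegral.integral_of_le hb.le, smul_eq_mul, mul_assoc, ← mul_inv,
      ← pow_succ, intervalIntegral.integral_const_mul,
      integral_inv_sub_cube hlb (hlb.trans hb)]
    ring
  rw [invGapIndicator, integral_withDensity_ofReal_indicator (by fun_prop)
    (measurableSet_Ico.prod measurableSet_Ioc) (fun _ _ => by positivity),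
    Measure.volume_eq_prod, setIntegral_prod _ (integrableOn_gapDensity_smul hab),
    setIntegral_congr_fun measurableSet_Ico hinner, integral_Ico_eq_integral_Ioo,
    ← integral_Ioc_eq_integral_Ioo, ← intervalIntegral.integral_of_le ha0,
    intervalIntegral.integral_sub (intervalIntegrable_inv_sub_sq (by linarith) hab)
      (intervalIntegrable_inv_sub_sq (by linarith) (hab.trans hb)),
    integral_inv_sub_sq (by linarith) hab, integral_inv_sub_sq (by linarith) (hab.trans hb)]
  simp

end invGapIndicator

open invGapIndicator in
theorem integral_invGapIndicator_quickValMeasure {a b : ℝ} (ha : 0 < a) (hab : a < b)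
    (hb : b < 1) : ∫ q, invGapIndicator a b q ∂quickValMeasure = (b - a)⁻¹ := by
  have hb0 : 0 < b := ha.trans hab
  have h₁ : Integrable (invGapIndicator a b) ((Measure.dirac 0).prod (Measure.dirac 1)) := by
    rw [Measure.dirac_prod_dirac]
    exact integrable_dirac enorm_lt_top
  have h₂ := integrable_withDensity_prod_dirac (hab.trans hb) hb
  have h₃ := integrable_dirac_prod_withDensity ha hb0
  rw [quickValMeasure, integral_add_measure ((h₁.add_measure h₂).add_measure h₃)
      (integrable_withDensity_gap hab), integral_add_measure (h₁.add_measure h₂) h₃,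
    integral_add_measure h₁ h₂, Measure.dirac_prod_dirac, integral_dirac,
    integral_withDensity_prod_dirac ha.le (hab.trans hb) hb,
    integral_dirac_prod_withDensity ha hb0 hb, integral_withDensity_gap ha.le hab hb]
  simp only [invGapIndicator, mem_prod, mem_Ico, le_refl, ha, and_self, mem_Ioc, hb,
    indicator_of_mem, sub_zero, inv_one, add_sub_cancel]
  ring

theorem stmt_16_general (α x y w u : ℝ)
    (hx0 : 0 ≤ x) (hxα : x < α) (hαy : α < y) (hy1 : y ≤ 1)
    (hw0 : 0 < w) (hwu : w < u) (hu1 : u < 1) :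
    ∫ q : ℝ × ℝ,
        indicator {q : ℝ × ℝ | 0 ≤ q.1 ∧ q.1 < α ∧ α < q.2 ∧ q.2 ≤ 1
            ∧ q.1 < w ∧ u < q.2}
          (fun q => (q.2 - q.1)⁻¹) q
      ∂((Measure.dirac (0 : ℝ)).prod (Measure.dirac (1 : ℝ))
        + (volume.withDensity (fun l : ℝ => ENNReal.ofReal (1 - l)⁻¹)).prod
            (Measure.dirac (1 : ℝ))
        + (Measure.dirac (0 : ℝ)).prod
            (volume.withDensity (fun r : ℝ => ENNReal.ofReal r⁻¹))
        + (volume : Measure (ℝ × ℝ)).withDensity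
            (fun q : ℝ × ℝ => ENNReal.ofReal (2 * ((q.2 - q.1) ^ 2)⁻¹)))
      = (max α u - min α w)⁻¹ := by
  have hrect : {q : ℝ × ℝ | 0 ≤ q.1 ∧ q.1 < α ∧ α < q.2 ∧ q.2 ≤ 1 ∧ q.1 < w ∧ u < q.2} =
      Ico 0 (min α w) ×ˢ Ioc (max α u) 1 := by
    ext q
    simp only [mem_ofPred_eq, mem_prod, mem_Ico, mem_Ioc, lt_min_iff, max_lt_iff]
    tauto
  rw [hrect]
  exact integral_invGapIndicator_quickValMeasure (lt_min (hx0.trans_lt hxα) hw0)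
    ((min_le_right α w).trans_lt (hwu.trans_le (le_max_right α u)))
    (max_lt (hαy.trans_le hy1) hu1)

/-- Identity \eqref{partOfIntegralES}: for the explicit measure
`ν(dλ,dρ) = δ₀(dλ)δ₁(dρ) + (1-λ)⁻¹ dλ δ₁(dρ) + δ₀(dλ) ρ⁻¹ dρ + 2(ρ-λ)⁻² dλ dρ`,
and `0 < w < u < 1`, the integral of `(ρ-λ)⁻¹ 1(0 ≤ λ < α < ρ ≤ 1) 1(λ < w < u < ρ)`
with respect to `ν` equals `[(α ∨ u) - (α ∧ w)]⁻¹`. -/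
theorem stmt_16 (α x y w u : ℝ)
    (hα0 : 0 ≤ α) (hα1 : α ≤ 1)
    (hx0 : 0 ≤ x) (hxα : x < α) (hαy : α < y) (hy1 : y ≤ 1)
    (hw0 : 0 < w) (hwu : w < u) (hu1 : u < 1) (hxw : x < w) (huy : u < y) :
    ∫ q : ℝ × ℝ,
        indicator {q : ℝ × ℝ | 0 ≤ q.1 ∧ q.1 < α ∧ α < q.2 ∧ q.2 ≤ 1
            ∧ q.1 < w ∧ u < q.2}
          (fun q => (q.2 - q.1)⁻¹) q
      ∂((Measure.dirac (0 : ℝ)).prod (Measure.dirac (1 : ℝ))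
        + (volume.withDensity (fun l : ℝ => ENNReal.ofReal (1 - l)⁻¹)).prod
            (Measure.dirac (1 : ℝ))
        + (Measure.dirac (0 : ℝ)).prod
            (volume.withDensity (fun r : ℝ => ENNReal.ofReal r⁻¹))
        + (volume : Measure (ℝ × ℝ)).withDensity
            (fun q : ℝ × ℝ => ENNReal.ofReal (2 * ((q.2 - q.1) ^ 2)⁻¹)))
      = (max α u - min α w)⁻¹ :=
  stmt_16_general α x y w u hx0 hxα hαy hy1 hw0 hwu hu1
end

section
/- A probabilistic source is Π-tame with parameters γ and A (i.e., π_k ≤ A(k+1)^{-γ} for all k ≥ 0) if and only if the symbol-comparison cost β_symb is tame with parameters ε = 1/γ and c = A^{1/γ} (i.e., β_symb(u,t) ≤ A^{1/γ}(t-u)^{-1/γ} for all 0 < u < t < 1). -/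
open MeasureTheory Set

/-- If `a <lex b <lex c` and `a`, `c` agree on the first `k` symbols, then so does `b`. -/
private lemma lex_sandwich {Alph : Type*} [LinearOrder Alph] {a b c : ℕ → Alph} {k : ℕ}
    (h1 : Pi.Lex (· < ·) (fun x y => x < y) a b)
    (h2 : Pi.Lex (· < ·) (fun x y => x < y) b c)
    (hac : ∀ i < k, a i = c i) : ∀ i < k, b i = a i := by
  obtain ⟨i, hi, hlt1⟩ := h1
  obtain ⟨j, hj, hlt2⟩ := h2
  intro m hm
  by_cases hik : i < k
  · exfalso
    rcases lt_trichotomy j i with h | h | h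
    · exact absurd ((hi j h).symm.trans (hac j (h.trans hik))) (ne_of_lt hlt2)
    · subst h
      have h3 : b j < a j := by rw [hac j hik]; exact hlt2
      exact lt_asymm hlt1 h3
    · exact absurd ((hj i h).trans (hac i hik).symm) (ne_of_gt hlt1)
  · exact (hi m (lt_of_lt_of_le hm (not_lt.1 hik))).symm

/-- The basic algebraic equivalence between the two tameness bounds. -/
private lemma alg_iff {γ A x P : ℝ} (hγ : 0 < γ) (hA : 0 < A) (hx : 0 < x) (hP : 0 < P) :
    x ≤ A * P ^ (-γ) ↔ P ≤ A ^ (1 / γ) * x ^ (-(1 / γ)) := by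
  have hPγ : (0:ℝ) < P ^ γ := Real.rpow_pos_of_pos hP γ
  have hAx : (0:ℝ) < A / x := div_pos hA hx
  have h1 : A ^ (1 / γ) * x ^ (-(1 / γ)) = (A / x) ^ γ⁻¹ := by
    rw [one_div, Real.rpow_neg hx.le, Real.div_rpow hA.le hx.le, div_eq_mul_inv]
  rw [h1, Real.le_rpow_inv_iff_of_pos hP.le hAx.le hγ, le_div_iff₀ hx,
    Real.rpow_neg hP.le, mul_comm (P ^ γ), ← le_div_iff₀ hPγ, div_eq_mul_inv]

/-- A probabilistic source (a strictly monotone map `M` from seeds in `(0,1)` to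
words, with respect to lexicographic order) is `Π`-tame with parameters `γ` and
`A` (i.e. every fundamental interval of depth `k` has measure at most
`A (k+1)^{-γ}`) if and only if the symbol-comparison cost
`β_symb(u,t) = k+1` (`k` the length of the longest common prefix of `M(u)` and
`M(t)`) is tame with parameters `ε = 1/γ`, `c = A^{1/γ}`, i.e.
`k + 1 ≤ A^{1/γ} (t-u)^{-1/γ}` whenever `0 < u < t < 1` and `M(u)`, `M(t)` agree
in their first `k` symbols. -/
theorem stmt_18 {Alph : Type*} [LinearOrder Alph] (γ A : ℝ) (hγ : 0 < γ) (hA : 0 < A)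
    (M : ℝ → ℕ → Alph)
    (hmono : ∀ u t, 0 < u → u < t → t < 1 →
      Pi.Lex (· < ·) (fun x y => x < y) (M u) (M t)) :
    (∀ k : ℕ, ∀ x, 0 < x → x < 1 →
        volume {y : ℝ | 0 < y ∧ y < 1 ∧ ∀ i < k, M y i = M x i}
          ≤ ENNReal.ofReal (A * ((k : ℝ) + 1) ^ (-γ)))
      ↔ (∀ u t, 0 < u → u < t → t < 1 → ∀ k : ℕ, (∀ i < k, M u i = M t i) →
          (k : ℝ) + 1 ≤ A ^ (1 / γ) * (t - u) ^ (-(1 / γ))) := by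
  constructor
  · intro hPi u t hu hut ht1 k hk
    have hP : (0:ℝ) < (k : ℝ) + 1 := by positivity
    have hsub : Ioo u t ⊆ {y : ℝ | 0 < y ∧ y < 1 ∧ ∀ i < k, M y i = M u i} := by
      intro y hy
      refine ⟨hu.trans hy.1, hy.2.trans ht1, ?_⟩
      exact lex_sandwich (hmono u y hu hy.1 (hy.2.trans ht1))
        (hmono y t (hu.trans hy.1) hy.2 ht1) hk
    have hm : ENNReal.ofReal (t - u) ≤ ENNReal.ofReal (A * ((k : ℝ) + 1) ^ (-γ)) := by
      calc ENNReal.ofReal (t - u) = volume (Ioo u t) := (Real.volume_Ioo).symm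
        _ ≤ volume {y : ℝ | 0 < y ∧ y < 1 ∧ ∀ i < k, M y i = M u i} := measure_mono hsub
        _ ≤ _ := hPi k u hu (hut.trans ht1)
    have hD : (0:ℝ) ≤ A * ((k : ℝ) + 1) ^ (-γ) := by positivity
    have hle : t - u ≤ A * ((k : ℝ) + 1) ^ (-γ) := (ENNReal.ofReal_le_ofReal_iff hD).mp hm
    exact (alg_iff hγ hA (sub_pos.mpr hut) hP).mp hle
  · intro hβ k x hx0 hx1
    set S := {y : ℝ | 0 < y ∧ y < 1 ∧ ∀ i < k, M y i = M x i} with hS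
    set D := A * ((k : ℝ) + 1) ^ (-γ) with hDdef
    have hD : (0:ℝ) < D := by positivity
    have hP : (0:ℝ) < (k : ℝ) + 1 := by positivity
    -- diameter bound
    have hdiam : ∀ u ∈ S, ∀ t ∈ S, u < t → t - u ≤ D := by
      intro u hu t ht hut
      have hk : ∀ i < k, M u i = M t i := fun i hi => (hu.2.2 i hi).trans (ht.2.2 i hi).symm
      exact (alg_iff hγ hA (sub_pos.mpr hut) hP).mpr
        (hβ u t hu.1 hut ht.2.1 k hk)
    rcases eq_empty_or_nonempty S with h | hne
    · simp [h]
    · have hbdd : BddBelow S := ⟨0, fun y hy => hy.1.le⟩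
      set a := sInf S with ha
      have hsub : S ⊆ Icc a (a + D) := by
        intro y hy
        refine ⟨csInf_le hbdd hy, ?_⟩
        by_contra hgt
        push_neg at hgt
        have h2 : sInf S < y - D := by linarith
        obtain ⟨u, huS, hu⟩ := (csInf_lt_iff hbdd hne).mp h2
        have : y - u ≤ D := hdiam u huS y hy (by linarith)
        linarith
      calc volume S ≤ volume (Icc a (a + D)) := measure_mono hsub
        _ = ENNReal.ofReal D := by rw [Real.volume_Icc]; ring_nf
end
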